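/- Suppose assumptions (A1), (A2), (A3), (A4), and (A5) hold. Then for every 0 < ε ≤ 1 and every solution (u, m) of Problem 1, the second derivatives u'' and m'' are ½-Hölder continuous; that is, (u, m) ∈ C^{2,1/2}(𝕋) × C^{2,1/2}(𝕋). -/

import Mathlib

open Set intervalIntegral

noncomputable section

/-- `f : ℝ → ℝ` is ½-Hölder continuous: there is `K ≥ 0` with
`|f x - f y| ≤ K * |x - y| ^ (1/2)` for all `x y`. -/
def IsHolderHalf (f : ℝ → ℝ) : Prop :=
  ∃ K : ℝ, 0 ≤ K ∧ ∀ x y : ℝ, |f x - f y| ≤ K * |x - y| ^ ((1 : ℝ) / 2)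

/-- `f` is a 1-periodic function of class `C²` (a `C²` function on the torus `𝕋`). -/
def MemC2T (f : ℝ → ℝ) : Prop :=
  Function.Periodic f 1 ∧ ContDiff ℝ 2 f

/-- `f ∈ C^{2,1/2}(𝕋)`: 1-periodic, of class `C²`, with ½-Hölder continuous
second derivative. -/
def MemC2HalfT (f : ℝ → ℝ) : Prop :=
  MemC2T f ∧ IsHolderHalf (deriv (deriv f))

/-- `(u, m)` is a solution of Problem 1 with Hamiltonian `H`, potential `V`,
exponent `α` and parameter `ε`: `u, m` are 1-periodic `C²` functions, `m > 0`
everywhere, and the system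
`u - u'' + H(u') + V = m^α + ε (m - m'')`,
`m - m'' - (H'(u') m)' = 1 - ε (u - u'')`
holds pointwise. -/
def SolvesMFG (H V : ℝ → ℝ) (α ε : ℝ) (u m : ℝ → ℝ) : Prop :=
  MemC2T u ∧ MemC2T m ∧ (∀ x, 0 < m x) ∧
  (∀ x : ℝ, u x - deriv (deriv u) x + H (deriv u x) + V x
      = m x ^ α + ε * (m x - deriv (deriv m) x)) ∧
  (∀ x : ℝ, m x - deriv (deriv m) x
      - deriv (fun y => deriv H (deriv u y) * m y) x
      = 1 - ε * (u x - deriv (deriv u) x))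

/-!
Convexity of `H` and positivity of `m` make `1 + ε² + ε H''(u') m` positive, so eliminating `m''`
between the two equations expresses `u''` as a quotient of `C¹` functions of `u, u', m, m'`; the
first equation then expresses `m''` through `u''`. Thus `u''` and `m''` are `C¹` and periodic,
hence bounded and Lipschitz, and interpolating between these gives ½-Hölder continuity.
-/

open Function
open scoped NNReal

theorem Function.Periodic.deriv {𝕜 F : Type*} [NontriviallyNormedField 𝕜] [NormedAddCommGroup F]
    [NormedSpace 𝕜 F] {f : 𝕜 → F} {c : 𝕜} (hf : Periodic f c) : Periodic (deriv f) c := by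
  intro x
  rw [← deriv_comp_add_const, funext hf]

theorem exists_holderWith_zero_of_isBounded_range {X Y : Type*} [PseudoMetricSpace X]
    [PseudoMetricSpace Y] {f : X → Y} (hf : Bornology.IsBounded (range f)) :
    ∃ C, HolderWith C 0 f := by
  obtain ⟨C, hC⟩ := Metric.isBounded_iff.mp hf
  refine ⟨C.toNNReal, fun x y => ?_⟩
  rw [NNReal.coe_zero, ENNReal.rpow_zero, mul_one, edist_le_coe, ← NNReal.coe_le_coe,
    coe_nndist]
  exact (hC (mem_range_self x) (mem_range_self y)).trans (Real.le_coe_toNNReal C)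

theorem Function.Periodic.exists_lipschitzWith {f : ℝ → ℝ} {c : ℝ} (hf : Periodic f c)
    (hc : c ≠ 0) (hf₁ : ContDiff ℝ 1 f) : ∃ L, LipschitzWith L f := by
  obtain ⟨L, hL⟩ := isBounded_iff_forall_norm_le.mp
    (hf.deriv.isBounded_of_continuous hc (hf₁.continuous_deriv le_rfl))
  refine ⟨L.toNNReal, lipschitzWith_of_nnnorm_deriv_le (hf₁.differentiable one_ne_zero) fun x => ?_⟩
  rw [← NNReal.coe_le_coe, coe_nnnorm]
  exact (hL _ (mem_range_self x)).trans (Real.le_coe_toNNReal L)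

theorem HolderWith.isHolderHalf {f : ℝ → ℝ} {C : ℝ≥0} (hf : HolderWith C (1 / 2) f) :
    IsHolderHalf f :=
  ⟨C, C.2, fun x y => by simpa [← Real.dist_eq] using hf.dist_le x y⟩

theorem Function.Periodic.isHolderHalf_of_contDiff {f : ℝ → ℝ} {c : ℝ} (hf : Periodic f c)
    (hc : c ≠ 0) (hf₁ : ContDiff ℝ 1 f) : IsHolderHalf f := by
  obtain ⟨C, hC⟩ :=
    exists_holderWith_zero_of_isBounded_range (hf.isBounded_of_continuous hc hf₁.continuous)
  obtain ⟨L, hL⟩ := hf.exists_lipschitzWith hc hf₁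
  exact (hC.of_le_of_le hL.holderWith (by norm_num) (by norm_num)).isHolderHalf

theorem ConvexOn.deriv_deriv_nonneg {f : ℝ → ℝ} (hf : ConvexOn ℝ univ f)
    (hd : Differentiable ℝ f) (x : ℝ) : 0 ≤ deriv (deriv f) x :=
  (monotoneOn_univ.mp (hf.monotoneOn_deriv fun y _ => hd y)).deriv_nonneg

namespace SolvesMFG

variable {H V : ℝ → ℝ} {α ε : ℝ} {u m : ℝ → ℝ}

theorem contDiff_fst (hs : SolvesMFG H V α ε u m) : ContDiff ℝ 2 u := hs.1.2

theorem contDiff_snd (hs : SolvesMFG H V α ε u m) : ContDiff ℝ 2 m := hs.2.1.2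

theorem contDiff_rpow_snd (hs : SolvesMFG H V α ε u m) : ContDiff ℝ 1 fun x => m x ^ α :=
  (hs.contDiff_snd.of_le one_le_two).rpow_const_of_ne fun x => (hs.2.2.1 x).ne'

/-- Eliminating `m''` between the two equations leaves an equation for `u''` alone. -/
theorem deriv_deriv_fst_mul_eq (hs : SolvesMFG H V α ε u m) (hH : Differentiable ℝ (deriv H))
    (x : ℝ) :
    deriv (deriv u) x * (1 + ε ^ 2 + ε * deriv (deriv H) (deriv u x) * m x) =
      (1 + ε ^ 2) * u x - ε + H (deriv u x) + V x - m x ^ α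
        - ε * (deriv H (deriv u x) * deriv m x) := by
  have hflux : HasDerivAt (fun y => deriv H (deriv u y) * m y)
      (deriv (deriv H) (deriv u x) * deriv (deriv u) x * m x + deriv H (deriv u x) * deriv m x) x :=
    ((hH _).hasDerivAt.comp x (hs.contDiff_fst.deriv'.differentiable one_ne_zero x).hasDerivAt).mul
      (hs.contDiff_snd.differentiable two_ne_zero x).hasDerivAt
  have hsnd := hs.2.2.2.2 x
  rw [hflux.deriv] at hsnd
  linear_combination -hs.2.2.2.1 x - ε * hsnd

theorem contDiff_deriv_deriv_fst (hs : SolvesMFG H V α ε u m) (hH : ContDiff ℝ 3 H)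
    (hconv : ConvexOn ℝ univ H) (hV : ContDiff ℝ 1 V) (hε : 0 ≤ ε) :
    ContDiff ℝ 1 (deriv (deriv u)) := by
  have hden_pos (x : ℝ) : 0 < 1 + ε ^ 2 + ε * deriv (deriv H) (deriv u x) * m x := by
    have := hconv.deriv_deriv_nonneg (hH.differentiable (by norm_num)) (deriv u x)
    have := hs.2.2.1 x
    positivity
  have hu'' : deriv (deriv u) = fun x =>
      ((1 + ε ^ 2) * u x - ε + H (deriv u x) + V x - m x ^ α
        - ε * (deriv H (deriv u x) * deriv m x)) /
      (1 + ε ^ 2 + ε * deriv (deriv H) (deriv u x) * m x) :=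
    funext fun x => eq_div_of_mul_eq (hden_pos x).ne'
      (hs.deriv_deriv_fst_mul_eq (hH.deriv'.differentiable two_ne_zero) x)
  have hu : ContDiff ℝ 1 u := hs.contDiff_fst.of_le one_le_two
  have hu' : ContDiff ℝ 1 (deriv u) := hs.contDiff_fst.deriv'
  have hm : ContDiff ℝ 1 m := hs.contDiff_snd.of_le one_le_two
  have hm' : ContDiff ℝ 1 (deriv m) := hs.contDiff_snd.deriv'
  have hH₁ : ContDiff ℝ 1 H := hH.of_le (by norm_num)
  have hH' : ContDiff ℝ 1 (deriv H) := hH.deriv'.of_le one_le_two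
  have hH'' : ContDiff ℝ 1 (deriv (deriv H)) := hH.deriv'.deriv'
  have hmα := hs.contDiff_rpow_snd
  rw [hu'']
  exact ContDiff.div (by fun_prop) (by fun_prop) fun x => (hden_pos x).ne'

theorem contDiff_deriv_deriv_snd (hs : SolvesMFG H V α ε u m) (hH : ContDiff ℝ 3 H)
    (hconv : ConvexOn ℝ univ H) (hV : ContDiff ℝ 1 V) (hε : 0 < ε) :
    ContDiff ℝ 1 (deriv (deriv m)) := by
  have hm'' : deriv (deriv m) = fun x =>
      m x - (u x - deriv (deriv u) x + H (deriv u x) + V x - m x ^ α) / ε := by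
    funext x
    field_simp
    linear_combination hs.2.2.2.1 x
  have hu : ContDiff ℝ 1 u := hs.contDiff_fst.of_le one_le_two
  have hu' : ContDiff ℝ 1 (deriv u) := hs.contDiff_fst.deriv'
  have hu'' := hs.contDiff_deriv_deriv_fst hH hconv hV hε.le
  have hm : ContDiff ℝ 1 m := hs.contDiff_snd.of_le one_le_two
  have hH₁ : ContDiff ℝ 1 H := hH.of_le (by norm_num)
  have hmα := hs.contDiff_rpow_snd
  rw [hm'']
  fun_prop

end SolvesMFG

theorem higher_regularity_general
    (α : ℝ)
    (H V : ℝ → ℝ)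
    (hA3 : ContDiff ℝ 2 V)
    (hA4 : ConvexOn ℝ Set.univ H)
    (hA5 : ContDiff ℝ 4 H) :
    ∀ ε : ℝ, 0 < ε → ε ≤ 1 → ∀ u m : ℝ → ℝ, SolvesMFG H V α ε u m →
      IsHolderHalf (deriv (deriv u)) ∧ IsHolderHalf (deriv (deriv m)) := by
  intro ε hε _ u m hs
  have hH : ContDiff ℝ 3 H := hA5.of_le (by norm_num)
  have hV : ContDiff ℝ 1 V := hA3.of_le one_le_two
  exact ⟨hs.1.1.deriv.deriv.isHolderHalf_of_contDiff one_ne_zero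
      (hs.contDiff_deriv_deriv_fst hH hA4 hV hε.le),
    hs.2.1.1.deriv.deriv.isHolderHalf_of_contDiff one_ne_zero
      (hs.contDiff_deriv_deriv_snd hH hA4 hV hε)⟩

/-- Under assumptions (A1)–(A5), for every `0 < ε ≤ 1` and every
solution `(u, m)` of Problem 1, the second derivatives `u''` and `m''` are
½-Hölder continuous, i.e. `(u, m) ∈ C^{2,1/2}(𝕋) × C^{2,1/2}(𝕋)`. -/
theorem higher_regularity
    (α : ℝ) (hα : 0 < α)
    (H V : ℝ → ℝ) (hH : ContDiff ℝ 2 H)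
    (hVper : Function.Periodic V 1)
    (γ C1 C2 C3 : ℝ) (hγ : 1 < γ) (hC1 : 0 < C1) (hC2 : 0 < C2) (hC3 : 0 < C3)
    (hA1 : ∀ p : ℝ, -C1 + C2 * |p| ^ γ ≤ H p ∧ H p ≤ C1 + C3 * |p| ^ γ)
    (tC1 tC2 tC3 : ℝ) (htC1 : 0 < tC1) (htC2 : 0 < tC2) (htC3 : 0 < tC3)
    (hA2 : ∀ p : ℝ, -tC1 + tC2 * |p| ^ γ ≤ p * deriv H p - H p ∧
        p * deriv H p - H p ≤ tC1 + tC3 * |p| ^ γ)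
    (hA3 : ContDiff ℝ 2 V)
    (hA4 : ConvexOn ℝ Set.univ H)
    (hA5 : ContDiff ℝ 4 H) :
    ∀ ε : ℝ, 0 < ε → ε ≤ 1 → ∀ u m : ℝ → ℝ, SolvesMFG H V α ε u m →
      IsHolderHalf (deriv (deriv u)) ∧ IsHolderHalf (deriv (deriv m)) :=
  higher_regularity_general α H V hA3 hA4 hA5
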